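/- For any rational p/q > 2 with q not dividing p, the power thickness of the circular complete graph K_{p/q} is strictly greater than 1. -/

import Mathlib

structure SGraph where
  V : Type
  Adj : V → V → Prop
  symm : ∀ u v, Adj u v → Adj v u

namespace SGraph

/-- There is a walk of length exactly `n` from `u` to `v`. -/
def walkLen (G : SGraph) : ℕ → G.V → G.V → Prop
  | 0, u, v => u = v
  | n+1, u, v => ∃ w, G.Adj u w ∧ G.walkLen n w v

theorem walkLen_concat (G : SGraph) : ∀ (n : ℕ) (u v w : G.V),
    G.walkLen n u v → G.Adj v w → G.walkLen (n+1) u w := by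
  intro n
  induction n with
  | zero =>
      intro u v w h hadj
      cases h
      exact ⟨w, hadj, rfl⟩
  | succ n ih =>
      rintro u v w ⟨x, hux, hxv⟩ hadj
      exact ⟨x, hux, ih x v w hxv hadj⟩

theorem walkLen_symm (G : SGraph) : ∀ (n : ℕ) (u v : G.V),
    G.walkLen n u v → G.walkLen n v u := by
  intro n
  induction n with
  | zero => intro u v h; exact h.symm
  | succ n ih =>
      rintro u v ⟨w, huw, hwv⟩
      exact G.walkLen_concat n v w u (ih w v hwv) (G.symm u w huw)

/-- The `k`-th power of a graph: same vertices, adjacency = existence of a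
walk of length exactly `k` (loops allowed). -/
def pow (G : SGraph) (k : ℕ) : SGraph where
  V := G.V
  Adj u v := G.walkLen k u v
  symm := G.walkLen_symm k

/-- Existence of a graph homomorphism. -/
def homTo (G H : SGraph) : Prop :=
  ∃ f : G.V → H.V, ∀ u v, G.Adj u v → H.Adj (f u) (f v)

/-- The `(2s+1)`-subdivision `S_{2s+1}(G)`: every edge is replaced by a path
of length `2s+1`.  Following the paper's notation, the ordered pair `(u,v)`
(with `u ~ v`) carries the `s` inner vertices `(uv)_1, …, (uv)_s`. -/
def subdiv (G : SGraph) (s : ℕ) : SGraph where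
  V := G.V ⊕ ({p : G.V × G.V // G.Adj p.1 p.2} × Fin s)
  Adj x y :=
    match x, y with
    | Sum.inl u, Sum.inl v => s = 0 ∧ G.Adj u v
    | Sum.inl u, Sum.inr (e, k) => u = e.1.2 ∧ (k : ℕ) = s - 1
    | Sum.inr (e, k), Sum.inl u => u = e.1.2 ∧ (k : ℕ) = s - 1
    | Sum.inr (e, k), Sum.inr (e', l) =>
        e'.1.1 = e.1.2 ∧ e'.1.2 = e.1.1 ∧
        ((k : ℕ) + (l : ℕ) + 2 = s ∨ (k : ℕ) + (l : ℕ) + 2 = s + 1)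
  symm := by
    rintro (u | ⟨e, k⟩) (v | ⟨e', l⟩) h
    · exact ⟨h.1, G.symm _ _ h.2⟩
    · exact h
    · exact h
    · obtain ⟨h1, h2, h3⟩ := h
      exact ⟨h2.symm, h1.symm, by omega⟩

/-- `q < og(G)`: the rational `q` is smaller than the odd girth of `G`
(the length of a shortest odd closed walk; vacuously true if `G` is bipartite). -/
def ltOddGirth (G : SGraph) (q : ℚ) : Prop :=
  ∀ n : ℕ, Odd n → (∃ v, G.walkLen n v v) → q < (n : ℚ)

/-- A graph is non-bipartite iff it contains an odd closed walk. -/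
def Nonbipartite (G : SGraph) : Prop :=
  ∃ (n : ℕ) (v : G.V), Odd n ∧ G.walkLen n v v

/-- The odd girth, as an extended natural number (`⊤` for bipartite graphs). -/
noncomputable def oddGirth (G : SGraph) : ℕ∞ :=
  sInf {N : ℕ∞ | ∃ n : ℕ, N = (n : ℕ∞) ∧ Odd n ∧ ∃ v, G.walkLen n v v}

/-- The complete graph on `m` vertices. -/
def completeGraph (m : ℕ) : SGraph :=
  ⟨Fin m, fun u v => u ≠ v, fun _ _ h => h.symm⟩

/-- The chromatic number: least `m` such that `G` maps homomorphically to `K_m`. -/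
noncomputable def chromatic (G : SGraph) : ℕ :=
  sInf {m : ℕ | G.homTo (completeGraph m)}

/-- The `i`-th power thickness
`θ_i(G) = sup { (2r+1)/(2s+1) | χ(G^{(2r+1)/(2s+1)}) ≤ χ(G)+i, (2r+1)/(2s+1) < og(G) }`. -/
noncomputable def powerThickness (G : SGraph) (i : ℤ) : ℝ :=
  sSup {x : ℝ | ∃ r s : ℕ, x = (2*(r:ℝ)+1)/(2*(s:ℝ)+1) ∧
    ((((G.subdiv s).pow (2*r+1)).chromatic : ℤ) ≤ (G.chromatic : ℤ) + i) ∧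
    G.ltOddGirth ((2*(r:ℚ)+1)/(2*(s:ℚ)+1))}

/-- The graph `H^{-1/(2r+1)}`. -/
def negPow (H : SGraph) (r : ℕ) : SGraph where
  V := {A : Fin (r+1) → Set H.V //
        (∃ v, A 0 = {v}) ∧
        ∀ i : Fin (r+1), (A i).Nonempty ∧ A i ⊆ {u | ∃ v ∈ A 0, H.walkLen i v u}}
  Adj A B :=
    (∀ i j : Fin (r+1), (j : ℕ) = (i : ℕ) + 1 → A.1 i ⊆ B.1 j ∧ B.1 i ⊆ A.1 j) ∧
    ∀ j : Fin (r+1), ∀ a ∈ A.1 j, ∀ b ∈ B.1 j, H.Adj a b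
  symm := by
    rintro A B ⟨h1, h2⟩
    exact ⟨fun i j hij => ⟨(h1 i j hij).2, (h1 i j hij).1⟩,
           fun j b hb a ha => H.symm _ _ (h2 j a ha b hb)⟩

/-- The circular complete graph `K_{n/d}`. -/
def circGraph (n d : ℕ) : SGraph where
  V := Fin n
  Adj u v := (d : ℤ) ≤ |(u : ℤ) - (v : ℤ)| ∧ |(u : ℤ) - (v : ℤ)| ≤ (n : ℤ) - d
  symm := by
    intro u v h
    rwa [abs_sub_comm]

/-- The circular chromatic number, as a real number. -/
noncomputable def circChrom (G : SGraph) : ℝ :=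
  sInf {x : ℝ | ∃ n d : ℕ, 0 < d ∧ 2 * d ≤ n ∧ Nat.gcd n d = 1 ∧
    x = (n : ℝ) / (d : ℝ) ∧ G.homTo (circGraph n d)}

/-- The cycle on `m` vertices. -/
def cycleGraph (m : ℕ) : SGraph :=
  ⟨ZMod m, fun i j => i = j + 1 ∨ j = i + 1, fun _ _ h => h.symm⟩

/-- Graph isomorphism. -/
def Isom (G H : SGraph) : Prop :=
  ∃ f : G.V ≃ H.V, ∀ u v, G.Adj u v ↔ H.Adj (f u) (f v)

/-- The helical graph `H(m,n,k)`. -/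
def helical (m n k : ℕ) : SGraph where
  V := {A : Fin k → Set (Fin m) //
        (∀ h : 0 < k, (A ⟨0, h⟩).ncard = n) ∧
        (∀ i, n ≤ (A i).ncard) ∧
        (∀ i : Fin k, ∀ h : (i : ℕ) + 1 < k, A i ∩ A ⟨(i : ℕ) + 1, h⟩ = ∅) ∧
        (∀ i : Fin k, ∀ h : (i : ℕ) + 2 < k, A i ⊆ A ⟨(i : ℕ) + 2, h⟩)}
  Adj A B :=
    (∀ i, A.1 i ∩ B.1 i = ∅) ∧
    (∀ i : Fin k, ∀ h : (i : ℕ) + 1 < k,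
      A.1 i ⊆ B.1 ⟨(i : ℕ) + 1, h⟩ ∧ B.1 i ⊆ A.1 ⟨(i : ℕ) + 1, h⟩)
  symm := by
    rintro A B ⟨h1, h2⟩
    refine ⟨fun i => ?_, fun i h => ⟨(h2 i h).2, (h2 i h).1⟩⟩
    rw [Set.inter_comm]
    exact h1 i

/-- A graph with chromatic number `k` is colorful if every proper `k`-coloring
admits a (nonempty) induced subgraph all of whose vertices see all `k` colors in
their closed neighborhood. -/
def Colorful (G : SGraph) : Prop :=
  ∀ c : G.V → Fin G.chromatic, (∀ u v, G.Adj u v → c u ≠ c v) →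
    ∃ S : Set G.V, S.Nonempty ∧
      ∀ v ∈ S, ∀ col : Fin G.chromatic,
        ∃ u ∈ S, (u = v ∨ G.Adj v u) ∧ c u = col

end SGraph

open SGraph

/-!
The chromatic number of `K_{p/q}` is `⌈p/q⌉ = p/q + 1`: an independent set has at most `q`
vertices and `q ∤ p`. The subdivision `S_{2s+1}(K_{p/q})` maps to `K_{(2s+1)p/(sp+q)}` by laying
the subdivided edge `ab` out in `2s+1` equal steps from `(2s+1)a` to `(2s+1)b`, and the
`(2r+1)`-st power of `K_{P/Q}` maps to `K_{P/((2r+1)Q-rP)}`. For `r = s+1` the composite lands in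
`K_{(2s+1)p/((2s+3)q-p)}`, whose ratio tends to `p/q < p/q + 1`; so for large `s` the graph
`K_{p/q}^{(2s+3)/(2s+1)}` is `(p/q+1)`-colourable, while `1 < (2s+3)/(2s+1) < 3 ≤ og(K_{p/q})`.
-/

theorem Fin.val_sub_add_val_cases {n : ℕ} (a b : Fin n) :
    (a - b).val + b.val = a.val ∨ (a - b).val + b.val = a.val + n := by
  have h := Fin.intCast_val_sub_eq_sub_add_ite a b
  split_ifs at h <;> omega

namespace SGraph

section Walks

variable {G H : SGraph}

theorem walkLen_add {m n : ℕ} {u v w : G.V} (huv : G.walkLen m u v) (hvw : G.walkLen n v w) :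
    G.walkLen (m + n) u w := by
  induction m generalizing u with
  | zero => cases huv; rwa [Nat.zero_add]
  | succ m ih =>
      obtain ⟨x, hux, hxv⟩ := huv
      rw [Nat.succ_add]
      exact ⟨x, hux, ih hxv⟩

theorem walkLen_map {f : G.V → H.V} (hf : ∀ u v, G.Adj u v → H.Adj (f u) (f v)) {n : ℕ}
    {u v : G.V} (h : G.walkLen n u v) : H.walkLen n (f u) (f v) := by
  induction n generalizing u with
  | zero => exact congrArg f h
  | succ n ih =>
      obtain ⟨w, huw, hwv⟩ := h
      exact ⟨f w, hf u w huw, ih hwv⟩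

theorem walkLen_one_self_iff {v : G.V} : G.walkLen 1 v v ↔ G.Adj v v :=
  ⟨fun ⟨_, hvw, hwv⟩ => (show _ = v from hwv) ▸ hvw, fun h => ⟨v, h, rfl⟩⟩

theorem ltOddGirth_of_loopless (hG : ∀ v, ¬ G.Adj v v) {x : ℚ} (hx : x < 3) :
    G.ltOddGirth x := by
  rintro n ⟨m, rfl⟩ ⟨v, hv⟩
  rcases m with _ | m
  · exact absurd (walkLen_one_self_iff.1 hv) (hG v)
  · exact hx.trans_le (by push_cast; linarith)

end Walks

namespace homTo

variable {G H K : SGraph}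

theorem trans (hGH : G.homTo H) (hHK : H.homTo K) : G.homTo K := by
  obtain ⟨f, hf⟩ := hGH
  obtain ⟨g, hg⟩ := hHK
  exact ⟨g ∘ f, fun u v huv => hg _ _ (hf u v huv)⟩

theorem pow (h : G.homTo H) (k : ℕ) : (G.pow k).homTo (H.pow k) := by
  obtain ⟨f, hf⟩ := h
  exact ⟨f, fun _ _ => walkLen_map hf⟩

end homTo

theorem chromatic_le_of_homTo {G : SGraph} {k : ℕ} (h : G.homTo (completeGraph k)) :
    G.chromatic ≤ k :=
  Nat.sInf_le h

theorem le_chromatic {G : SGraph} {k : ℕ} (hG : ∃ m, G.homTo (completeGraph m))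
    (h : ∀ m, G.homTo (completeGraph m) → k ≤ m) : k ≤ G.chromatic :=
  h _ (Nat.sInf_mem hG)

theorem le_powerThickness {G : SGraph} (hG : G.Nonbipartite) {i : ℤ} {r s : ℕ}
    (hχ : (((G.subdiv s).pow (2*r+1)).chromatic : ℤ) ≤ G.chromatic + i)
    (hog : G.ltOddGirth ((2*(r:ℚ)+1)/(2*(s:ℚ)+1))) :
    (2*(r:ℝ)+1)/(2*(s:ℝ)+1) ≤ G.powerThickness i := by
  obtain ⟨n, v, hn, hv⟩ := hG
  refine le_csSup ⟨n, ?_⟩ ⟨r, s, rfl, hχ, hog⟩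
  rintro x ⟨r', s', rfl, -, hog'⟩
  have hlt := Rat.cast_le (K := ℝ) |>.2 (hog' n hn ⟨v, hv⟩).le
  push_cast at hlt
  exact hlt

section CircGraph

open Fin.CommRing

variable {P Q : ℕ}

theorem circGraph_adj_iff (u v : Fin P) :
    (circGraph P Q).Adj u v ↔ Q ≤ (v - u).val ∧ (v - u).val + Q ≤ P := by
  have hvu := Fin.val_sub_add_val_cases v u
  have hu := u.isLt
  have hv := v.isLt
  show (Q : ℤ) ≤ |(u : ℤ) - v| ∧ |(u : ℤ) - v| ≤ P - Q ↔ _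
  rcases abs_cases ((u : ℤ) - v) with ⟨h, _⟩ | ⟨h, _⟩ <;> rw [h] <;> omega

theorem circGraph_adj_add [NeZero P] (u : Fin P) {t : ℕ} (ht : Q ≤ t) (ht' : t + Q ≤ P) :
    (circGraph P Q).Adj u (u + (t : Fin P)) := by
  rw [circGraph_adj_iff, add_sub_cancel_left, Fin.val_natCast]
  rcases Nat.lt_or_ge t P with h | h
  · rw [Nat.mod_eq_of_lt h]
    omega
  · have := Nat.mod_lt t (NeZero.pos P)
    omega

theorem circGraph_walkLen_add_mul [NeZero P] (u : Fin P) {t : ℕ} (ht : Q ≤ t)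
    (ht' : t + Q ≤ P) (n : ℕ) : (circGraph P Q).walkLen n u (u + ((n * t : ℕ) : Fin P)) := by
  induction n generalizing u with
  | zero =>
      show u = u + ((0 * t : ℕ) : Fin P)
      simp
  | succ n ih =>
      have hend :
          u + (((n + 1) * t : ℕ) : Fin P) = (u + (t : Fin P)) + ((n * t : ℕ) : Fin P) := by
        push_cast
        ring
      exact ⟨u + (t : Fin P), circGraph_adj_add u ht ht', hend ▸ ih _⟩

theorem circGraph_walkLen_exists_shift [NeZero P] {n : ℕ} {u v : Fin P}
    (h : (circGraph P Q).walkLen n u v) :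
    ∃ T : ℕ, n * Q ≤ T ∧ T + n * Q ≤ n * P ∧ v = u + (T : Fin P) := by
  induction n generalizing u with
  | zero => exact ⟨0, by simp, by simp, by rw [Nat.cast_zero, add_zero]; exact h.symm⟩
  | succ n ih =>
      obtain ⟨w, huw, hwv⟩ := h
      change Fin P at w
      obtain ⟨T, hT, hT', rfl⟩ := ih hwv
      have hstep := (circGraph_adj_iff u w).1 huw
      refine ⟨(w - u).val + T, ?_, ?_, ?_⟩
      · rw [Nat.succ_mul]; omega
      · rw [Nat.succ_mul, Nat.succ_mul]; omega
      · rw [Nat.cast_add, Fin.cast_val_eq_self]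
        ring

/-- A `(2r+1)`-walk moves by some `T ∈ [(2r+1)Q, (2r+1)(P-Q)]`; taking off `r` full turns leaves a
displacement in `[Q', P - Q']` with `Q' = (2r+1)Q - rP`. -/
theorem circGraph_pow_homTo [NeZero P] (r : ℕ) (h : r * P ≤ (2*r+1) * Q) :
    ((circGraph P Q).pow (2*r+1)).homTo (circGraph P ((2*r+1) * Q - r * P)) := by
  refine ⟨id, fun u v huv => ?_⟩
  obtain ⟨T, hT, hT', rfl⟩ := circGraph_walkLen_exists_shift huv
  have hwind : (2*r+1) * P = 2 * (r * P) + P := by ring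
  obtain ⟨T', rfl⟩ : ∃ T', T = T' + r * P := ⟨T - r * P, by omega⟩
  have hP : ((T' + r * P : ℕ) : Fin P) = T' := by
    rw [Nat.cast_add, Nat.cast_mul, Fin.natCast_self, mul_zero, add_zero]
  rw [id, hP]
  exact circGraph_adj_add u (by omega) (by omega)

theorem circGraph_homTo_completeGraph {k : ℕ} (hQ : 0 < Q) (hPk : P ≤ k * Q) :
    (circGraph P Q).homTo (completeGraph k) := by
  refine ⟨fun u => ⟨u.val / Q, (Nat.div_lt_iff_lt_mul hQ).2 (u.isLt.trans_le hPk)⟩,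
    fun u v huv heq => ?_⟩
  have hdiv : u.val / Q = v.val / Q := Fin.val_eq_of_eq heq
  have := Nat.div_mul_le_self u.val Q
  have := Nat.lt_div_mul_add (a := u.val) hQ
  have := Nat.div_mul_le_self v.val Q
  have := Nat.lt_div_mul_add (a := v.val) hQ
  have hvu := Fin.val_sub_add_val_cases v u
  have hv := v.isLt
  have := (circGraph_adj_iff u v).1 huv
  rw [hdiv] at *
  omega

end CircGraph

section CircGraphChromatic

open Fin.CommRing

variable {p q : ℕ}

theorem circGraph_loopless (hq : 0 < q) (v : Fin p) : ¬ (circGraph p q).Adj v v := by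
  have := Fin.val_sub_add_val_cases v v
  have := (v - v).isLt
  rw [circGraph_adj_iff]
  omega

/-- An independent set lies in the arc of length `2q - 1` around any of its points, and that arc
splits into the vertex itself and `q - 1` adjacent pairs `a + j`, `a + j - q`. -/
theorem circGraph_card_le_of_indep (hq : 0 < q) (hpq : 2 * q ≤ p) (S : Finset (Fin p))
    (hS : ∀ u ∈ S, ∀ v ∈ S, ¬ (circGraph p q).Adj u v) : S.card ≤ q := by
  obtain rfl | ⟨a, ha⟩ := S.eq_empty_or_nonempty
  · simp
  let fold : Fin p → ℕ := fun x => if (x - a).val < q then (x - a).val else (x - a).val + q - p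
  have hnear : ∀ x ∈ S, (x - a).val < q ∨ p < (x - a).val + q := fun x hx => by
    have := hS a ha x hx
    rw [circGraph_adj_iff] at this
    omega
  have hmaps : Set.MapsTo fold S (Finset.range q) := fun x hx => by
    have := (x - a).isLt
    have := hnear x hx
    simp only [fold, Finset.coe_range, Set.mem_Iio]
    split_ifs <;> omega
  have hinj : Set.InjOn fold S := fun x hx y hy hxy => by
    have hxa := Fin.val_sub_add_val_cases x a
    have hya := Fin.val_sub_add_val_cases y a
    have hyx := Fin.val_sub_add_val_cases y x
    have hxy' := Fin.val_sub_add_val_cases x y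
    have := hnear x hx
    have := hnear y hy
    have := (circGraph_adj_iff x y).not.1 (hS x hx y hy)
    have := (circGraph_adj_iff y x).not.1 (hS y hy x hx)
    simp only [fold] at hxy
    apply Fin.ext
    split_ifs at hxy <;> omega
  simpa using Finset.card_le_card_of_injOn fold hmaps hinj

theorem le_of_circGraph_homTo_completeGraph (hq : 0 < q) (hpq : 2 * q ≤ p) (hnd : ¬ q ∣ p)
    {m : ℕ} (h : (circGraph p q).homTo (completeGraph m)) : p / q + 1 ≤ m := by
  obtain ⟨f, hf⟩ := h
  change Fin p → Fin m at f
  have hfiber : ∀ c ∈ Finset.univ.image f, (Finset.univ.filter (f · = c)).card ≤ q :=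
    fun c _ => circGraph_card_le_of_indep hq hpq _ fun u hu v hv huv =>
      hf u v huv ((Finset.mem_filter.1 hu).2.trans (Finset.mem_filter.1 hv).2.symm)
  have hpm : p ≤ q * m :=
    calc p = (Finset.univ : Finset (Fin p)).card := (Finset.card_fin p).symm
      _ ≤ q * (Finset.univ.image f).card := Finset.card_le_mul_card_image _ q hfiber
      _ ≤ q * m := Nat.mul_le_mul_left q ((Finset.card_le_univ _).trans_eq (Fintype.card_fin m))
  have hlt : p < m * q := by
    rw [mul_comm]
    exact hpm.lt_of_ne fun h => hnd ⟨m, h⟩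
  have := (Nat.div_lt_iff_lt_mul hq).2 hlt
  omega

theorem circGraph_chromatic (hq : 0 < q) (hpq : 2 * q ≤ p) (hnd : ¬ q ∣ p) :
    (circGraph p q).chromatic = p / q + 1 := by
  have hhom : (circGraph p q).homTo (completeGraph (p / q + 1)) :=
    circGraph_homTo_completeGraph hq (Nat.lt_mul_of_div_lt (Nat.lt_succ_self _) hq).le
  exact le_antisymm (chromatic_le_of_homTo hhom)
    (le_chromatic ⟨_, hhom⟩ fun _ => le_of_circGraph_homTo_completeGraph hq hpq hnd)

/-- Go around the circle with `p + q + 1` steps of length `q` and `p - q` steps of length `q + 1`,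
covering `(2q + 1)p` in `2p + 1` steps. -/
theorem circGraph_nonbipartite (hq : 0 < q) (hpq : 2 * q < p) : (circGraph p q).Nonbipartite := by
  have : NeZero p := ⟨by omega⟩
  have hwalk := walkLen_add (circGraph_walkLen_add_mul (0 : Fin p) le_rfl (by omega) (p + q + 1))
    (circGraph_walkLen_add_mul _ (Nat.le_succ q) (by omega) (p - q))
  have hlen : p + q + 1 + (p - q) = 2 * p + 1 := by omega
  have hend : (0 : Fin p) + (((p + q + 1) * q : ℕ) : Fin p)
      + (((p - q) * (q + 1) : ℕ) : Fin p) = 0 := by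
    rw [zero_add, ← Nat.cast_add, Fin.natCast_eq_zero]
    exact ⟨2 * q + 1, by zify [(by omega : q ≤ p)]; ring⟩
  rw [hlen, hend] at hwalk
  exact ⟨2 * p + 1, (0 : Fin p), odd_two_mul_add_one p, hwalk⟩

end CircGraphChromatic

section Subdivision

open Fin.CommRing

variable {p q : ℕ} [NeZero p] (s : ℕ)

/-- The point reached after `i` steps of length `sp + (b - a)` from `(2s+1)a`; after `2s+1` steps
it is `(2s+1)b`, so these points trace the subdivided edge `ab` inside `K_{(2s+1)p/(sp+q)}`. -/
def subdivPoint (a b : Fin p) (i : ℕ) : Fin (p * (2*s+1)) :=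
  (((2*s+1) * a.val + i * (s*p + (b - a).val) : ℕ) : Fin (p * (2*s+1)))

theorem subdivPoint_zero (a b : Fin p) :
    subdivPoint s a b 0 = (((2*s+1) * a.val : ℕ) : Fin (p * (2*s+1))) := by
  simp [subdivPoint]

theorem subdivPoint_succ (a b : Fin p) (i : ℕ) :
    subdivPoint s a b (i + 1) =
      subdivPoint s a b i + ((s*p + (b - a).val : ℕ) : Fin (p * (2*s+1))) := by
  simp only [subdivPoint]
  push_cast
  ring

theorem subdivPoint_symm {a b : Fin p} (hab : a ≠ b) {i : ℕ} (hi : i ≤ 2*s+1) :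
    subdivPoint s a b i = subdivPoint s b a (2*s+1 - i) := by
  have hba := Fin.val_sub_add_val_cases b a
  have hab' := Fin.val_sub_add_val_cases a b
  have hne : a.val ≠ b.val := Fin.val_ne_of_ne hab
  have := (b - a).isLt
  have := (a - b).isLt
  have hsum : (b - a).val + (a - b).val = p := by omega
  obtain ⟨c, hc⟩ : ∃ c, (b - a).val + a.val = b.val + p * c := by
    rcases hba with h | h
    exacts [⟨0, by omega⟩, ⟨1, by omega⟩]
  generalize hj : 2*s+1 - i = j
  have hij : i + j = 2*s+1 := by omega
  have hP : ((p * (2*s+1) : ℕ) : Fin (p * (2*s+1))) = 0 := Fin.natCast_self _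
  have hc' := congrArg (Nat.cast (R := Fin (p * (2*s+1)))) hc
  have hsum' := congrArg (Nat.cast (R := Fin (p * (2*s+1)))) hsum
  have hij' := congrArg (Nat.cast (R := Fin (p * (2*s+1)))) hij
  simp only [subdivPoint]
  push_cast at hP hc' hsum' hij' ⊢
  linear_combination (2*(s : Fin (p * (2*s+1)))+1) * hc' - (j : Fin (p * (2*s+1))) * hsum'
    + (((b - a).val : Fin (p * (2*s+1))) - s*p - p) * hij'
    + (c + i - s - 1 : Fin (p * (2*s+1))) * hP

theorem subdivPoint_adj {a b : Fin p} (hab : (circGraph p q).Adj a b) (i : ℕ) :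
    (circGraph (p * (2*s+1)) (s*p + q)).Adj
      (subdivPoint s a b i) (subdivPoint s a b (i + 1)) := by
  have hd := (circGraph_adj_iff a b).1 hab
  have hP : p * (2*s+1) = 2 * (s*p) + p := by ring
  rw [subdivPoint_succ]
  exact circGraph_adj_add _ (by omega) (by omega)

/-- Sends the original vertex `u` to `(2s+1)u` and the inner vertex `(ab)_j`, which lies
`2j + 2` steps from `a` on the subdivided edge, to `subdivPoint s a b (2j+2)`. -/
def subdivEmbed : ((circGraph p q).subdiv s).V → Fin (p * (2*s+1))
  | .inl u => (((2*s+1) * u.val : ℕ) : Fin (p * (2*s+1)))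
  | .inr (e, j) => subdivPoint s e.1.1 e.1.2 (2 * j.val + 2)

theorem circGraph_subdiv_homTo (hq : 0 < q) :
    ((circGraph p q).subdiv s).homTo (circGraph (p * (2*s+1)) (s*p + q)) := by
  have hne : ∀ {a b : Fin p}, (circGraph p q).Adj a b → a ≠ b :=
    fun h hab => circGraph_loopless hq _ (hab ▸ h)
  have hlast : ∀ {a b : Fin p}, (circGraph p q).Adj a b →
      (((2*s+1) * b.val : ℕ) : Fin (p * (2*s+1))) = subdivPoint s a b (2*s+1) := fun hab => by
    rw [subdivPoint_symm s (hne hab) le_rfl, Nat.sub_self, subdivPoint_zero]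
  refine ⟨subdivEmbed s, ?_⟩
  rintro (u | ⟨⟨⟨a, b⟩, hab⟩, j⟩) (v | ⟨⟨⟨a', b'⟩, hab'⟩, l⟩) h
  · obtain ⟨rfl, huv⟩ := h
    simp only [subdivEmbed]
    rw [← subdivPoint_zero 0 u v, hlast huv]
    exact subdivPoint_adj 0 huv 0
  · obtain ⟨rfl, hl⟩ := h
    simp only [subdivEmbed]
    rw [hlast hab', show 2 * l.val + 2 = 2 * s by omega]
    exact (circGraph _ _).symm _ _ (subdivPoint_adj s hab' (2 * s))
  · obtain ⟨rfl, hj⟩ := h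
    simp only [subdivEmbed]
    rw [hlast hab, show 2 * j.val + 2 = 2 * s by omega]
    exact subdivPoint_adj s hab (2 * s)
  · obtain ⟨rfl, rfl, hjl⟩ := h
    simp only [subdivEmbed]
    rw [subdivPoint_symm s (hne hab') (i := 2 * l.val + 2) (by omega)]
    rcases hjl with hjl | hjl
    · rw [show 2*s+1 - (2 * l.val + 2) = 2 * j.val + 2 + 1 by omega]
      exact subdivPoint_adj s hab _
    · rw [show 2*s+1 - (2 * l.val + 2) = 2 * j.val + 1 by omega]
      exact (circGraph _ _).symm _ _ (subdivPoint_adj s hab _)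

end Subdivision

variable {p q : ℕ}

theorem circGraph_subdiv_pow_homTo [NeZero p] (hq : 0 < q) (s : ℕ) (hs : p < (2*s+3) * q) :
    (((circGraph p q).subdiv s).pow (2*(s+1)+1)).homTo
      (circGraph (p * (2*s+1)) ((2*s+3) * q - p)) := by
  have hid : (2*(s+1)+1) * (s*p + q) + p = (s+1) * (p * (2*s+1)) + (2*s+3) * q := by ring
  have hQ : (2*(s+1)+1) * (s*p + q) - (s+1) * (p * (2*s+1)) = (2*s+3) * q - p := by omega
  have hwind := circGraph_pow_homTo (P := p * (2*s+1)) (Q := s*p + q) (s+1) (by omega)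
  rw [hQ] at hwind
  exact ((circGraph_subdiv_homTo s hq).pow _).trans hwind

theorem circGraph_subdiv_pow_chromatic_le [NeZero p] (hq : 0 < q) {k s : ℕ} (hk : p < k * q)
    (hs : k * p ≤ 2*s+3) : (((circGraph p q).subdiv s).pow (2*(s+1)+1)).chromatic ≤ k := by
  have hscaled : (p + 1) * (2*s+3) ≤ k * ((2*s+3) * q) := by nlinarith
  have hsp : p < (2*s+3) * q := by nlinarith
  refine chromatic_le_of_homTo ((circGraph_subdiv_pow_homTo hq s hsp).trans
    (circGraph_homTo_completeGraph (by omega) ?_))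
  have hexpand : (p + 1) * (2*s+3) = p * (2*s+1) + (2*p + 2*s + 3) := by ring
  rw [Nat.mul_sub]
  omega

end SGraph

theorem powerThickness_circ_gt_one (p q : ℕ) (hq : 0 < q)
    (h2 : 2 < (p : ℚ) / (q : ℚ)) (hnd : ¬ q ∣ p) :
    1 < (circGraph p q).powerThickness 0 := by
  have hpq : 2 * q < p := by exact_mod_cast (lt_div_iff₀ (by exact_mod_cast hq)).1 h2
  have : NeZero p := ⟨by omega⟩
  set s := (p / q + 1) * p
  have hs : (0 : ℚ) < s := by exact_mod_cast Nat.mul_pos (Nat.succ_pos _) (NeZero.pos p)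
  have hχ : (((circGraph p q).subdiv s).pow (2*(s+1)+1)).chromatic ≤
      (circGraph p q).chromatic := by
    rw [circGraph_chromatic hq hpq.le hnd]
    exact circGraph_subdiv_pow_chromatic_le hq (Nat.lt_mul_of_div_lt (Nat.lt_succ_self _) hq)
      (by omega)
  have hog : (circGraph p q).ltOddGirth ((2*((s+1 : ℕ) : ℚ)+1)/(2*(s : ℚ)+1)) :=
    ltOddGirth_of_loopless (circGraph_loopless hq) (by
      rw [div_lt_iff₀ (by positivity)]; push_cast; linarith)
  calc (1 : ℝ) < (2*((s+1 : ℕ) : ℝ)+1)/(2*(s : ℝ)+1) := by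
        rw [one_lt_div (by positivity)]; push_cast; linarith
    _ ≤ _ := le_powerThickness (circGraph_nonbipartite hq hpq)
        (by rw [add_zero]; exact_mod_cast hχ) hog
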